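/- Let n ≥ 3 and consider the root system B_n with simple roots α_i = ε_i − ε_{i+1} (1 ≤ i ≤ n−1) and α_n = ε_n. Let Π′ be a basis of ℝ^n consisting of positive roots of B_n with pairwise nonpositive inner products, such that each element of Π′ is either a simple root or a sum of two adjacent simple roots, and assume the reflection group Γ generated by {s_β : β ∈ Π′} is a proper subgroup of W(B_n). Then Γ = B_I × B_J where J = {1,…,n} \ I and I is either {n, n−2, …, n−2k} for some 0 ≤ k < (n−1)/2 or {n−1, n−3, …, n−2k+1} for some 0 < k < n/2. -/

import Mathlib

/-- The orthogonal reflection of `ℝ^n` in the hyperplane orthogonal to `α`. -/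
noncomputable def sref {n : ℕ} (α : EuclideanSpace ℝ (Fin n)) :
    EuclideanSpace ℝ (Fin n) ≃ₗᵢ[ℝ] EuclideanSpace ℝ (Fin n) :=
  Submodule.reflection ((Submodule.span ℝ {α})ᗮ)

/-- The standard basis vector `ε_i` of `ℝ^n`. -/
noncomputable def eps {n : ℕ} (i : Fin n) : EuclideanSpace ℝ (Fin n) :=
  EuclideanSpace.single i (1 : ℝ)

/-- The reflections of the hyperoctahedral group `W(B_n)`: the `s_{ε_i ± ε_j}` (`i ≠ j`)
and the `s_{ε_i}`, restricted to indices in a subset `I`. -/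
def BnReflectionsOn {n : ℕ} (I : Set (Fin n)) :
    Set (EuclideanSpace ℝ (Fin n) ≃ₗᵢ[ℝ] EuclideanSpace ℝ (Fin n)) :=
  {g | (∃ i ∈ I, ∃ j ∈ I, i ≠ j ∧
          (g = sref (eps i - eps j) ∨ g = sref (eps i + eps j))) ∨
       ∃ i ∈ I, g = sref (eps i)}

/-- The reflections `s_{ε_i ± ε_j}` (`i ≠ j`) with indices in `I`. -/
def DnReflectionsOn {n : ℕ} (I : Set (Fin n)) :
    Set (EuclideanSpace ℝ (Fin n) ≃ₗᵢ[ℝ] EuclideanSpace ℝ (Fin n)) :=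
  {g | ∃ i ∈ I, ∃ j ∈ I, i ≠ j ∧
        (g = sref (eps i - eps j) ∨ g = sref (eps i + eps j))}

/-- The group `B_I` of signed permutations of the coordinates in `I`. -/
noncomputable def BGrp {n : ℕ} (I : Set (Fin n)) :
    Subgroup (EuclideanSpace ℝ (Fin n) ≃ₗᵢ[ℝ] EuclideanSpace ℝ (Fin n)) :=
  Subgroup.closure (BnReflectionsOn I)

/-- The group `D_I` of signed permutations of the coordinates in `I` with an even number
of sign changes. -/
noncomputable def DGrp {n : ℕ} (I : Set (Fin n)) :
    Subgroup (EuclideanSpace ℝ (Fin n) ≃ₗᵢ[ℝ] EuclideanSpace ℝ (Fin n)) :=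
  Subgroup.closure (DnReflectionsOn I)

open RealInnerProductSpace

/-- The positive roots of `B_n` (0-based indices): `ε_i - ε_j`, `ε_i + ε_j` (`i < j`) and
`ε_i`. -/
def BnPositiveRoots (n : ℕ) : Set (EuclideanSpace ℝ (Fin n)) :=
  {v | (∃ i j : Fin n, i < j ∧ (v = eps i - eps j ∨ v = eps i + eps j)) ∨ ∃ i, v = eps i}

/-- The simple roots of `B_n` (0-based): `α_i = ε_i - ε_{i+1}` for `i < n - 1` and
`α_{n-1} = ε_{n-1}`. -/
noncomputable def BnSimple (n : ℕ) (i : Fin n) : EuclideanSpace ℝ (Fin n) :=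
  if h : (i : ℕ) + 1 < n then eps i - eps ⟨(i : ℕ) + 1, h⟩ else eps i

noncomputable def en (n a : ℕ) : EuclideanSpace ℝ (Fin n) :=
  if h : a < n then eps ⟨a, h⟩ else 0

lemma en_eq {n a : ℕ} (h : a < n) : en n a = eps ⟨a, h⟩ := dif_pos h

lemma eps_apply {n : ℕ} (i k : Fin n) : eps i k = if k = i then (1:ℝ) else 0 := by
  simp [eps, EuclideanSpace.single_apply]

lemma en_apply {n a : ℕ} (k : Fin n) : en n a k = if (k : ℕ) = a then (1:ℝ) else 0 := by
  by_cases h : a < n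
  · simp [en, h, eps_apply, Fin.ext_iff]
  · have hk : ¬((k:ℕ) = a) := by omega
    simp [en, h, hk]

lemma sref_apply {n : ℕ} (α x : EuclideanSpace ℝ (Fin n)) :
    sref α x = x - ((2 / (‖α‖^2)) * ⟪α, x⟫) • α := by
  rw [sref, Submodule.reflection_apply, Submodule.starProjection_orthogonal_val,
    Submodule.starProjection_singleton]
  simp only [RCLike.ofReal_real_eq_id, id_eq]
  rw [two_smul]
  module

lemma inner_eps_left {n : ℕ} (i : Fin n) (x : EuclideanSpace ℝ (Fin n)) :
    ⟪eps i, x⟫ = x i := by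
  simp [eps, EuclideanSpace.inner_single_left]

lemma inner_eps_right {n : ℕ} (i : Fin n) (x : EuclideanSpace ℝ (Fin n)) :
    ⟪x, eps i⟫ = x i := by
  rw [real_inner_comm]; exact inner_eps_left i x

lemma sref_sub_apply {n : ℕ} (i j : Fin n) (hij : i ≠ j) (x : EuclideanSpace ℝ (Fin n))
    (k : Fin n) :
    sref (eps i - eps j) x k = if k = i then x j else if k = j then x i else x k := by
  have h2 : ‖eps i - eps j‖^2 = (2:ℝ) := by
    rw [← real_inner_self_eq_norm_sq]
    simp only [inner_sub_left, inner_sub_right, inner_eps_left, inner_eps_right, PiLp.sub_apply, eps_apply]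
    simp [hij, hij.symm]
    norm_num
  rw [sref_apply, h2]
  simp only [inner_sub_left, inner_eps_left, PiLp.sub_apply, PiLp.smul_apply, smul_eq_mul,
    eps_apply]
  split_ifs <;> subst_vars <;> simp_all <;> try ring

lemma sref_add_apply {n : ℕ} (i j : Fin n) (hij : i ≠ j) (x : EuclideanSpace ℝ (Fin n))
    (k : Fin n) :
    sref (eps i + eps j) x k = if k = i then -x j else if k = j then -x i else x k := by
  have h2 : ‖eps i + eps j‖^2 = (2:ℝ) := by
    rw [← real_inner_self_eq_norm_sq]
    simp only [inner_add_left, inner_add_right, inner_eps_left, inner_eps_right, PiLp.add_apply, eps_apply]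
    simp [hij, hij.symm]
    norm_num
  rw [sref_apply, h2]
  simp only [inner_add_left, inner_eps_left, PiLp.sub_apply, PiLp.add_apply, PiLp.smul_apply,
    smul_eq_mul, eps_apply]
  split_ifs <;> subst_vars <;> simp_all <;> try ring

lemma sref_eps_apply {n : ℕ} (i : Fin n) (x : EuclideanSpace ℝ (Fin n)) (k : Fin n) :
    sref (eps i) x k = if k = i then -x i else x k := by
  have h2 : ‖eps i‖^2 = (1:ℝ) := by
    rw [← real_inner_self_eq_norm_sq]
    simp only [inner_eps_left, eps_apply]
    simp
  rw [sref_apply, h2]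
  simp only [inner_eps_left, PiLp.sub_apply, PiLp.smul_apply, smul_eq_mul, eps_apply]
  split_ifs <;> subst_vars <;> simp_all <;> try ring

lemma lie_ext {n : ℕ} {f g : EuclideanSpace ℝ (Fin n) ≃ₗᵢ[ℝ] EuclideanSpace ℝ (Fin n)}
    (h : ∀ x k, f x k = g x k) : f = g :=
  LinearIsometryEquiv.ext fun x => PiLp.ext fun k => h x k

lemma sref_sub_comm {n : ℕ} (i j : Fin n) (hij : i ≠ j) :
    sref (eps i - eps j) = sref (eps j - eps i) := by
  refine lie_ext fun x k => ?_
  rw [sref_sub_apply i j hij, sref_sub_apply j i hij.symm]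
  split_ifs <;> subst_vars <;> simp_all

lemma srefI1 {n : ℕ} (a b c : Fin n) (hab : a ≠ b) (hac : a ≠ c) (hbc : b ≠ c) :
    sref (eps a - eps c) =
      sref (eps b - eps c) * sref (eps a - eps b) * sref (eps b - eps c) := by
  refine lie_ext fun x k => ?_
  simp only [LinearIsometryEquiv.coe_mul, Function.comp_apply]
  simp only [sref_sub_apply a c hac, sref_sub_apply b c hbc, sref_sub_apply a b hab]
  split_ifs <;> subst_vars <;> simp_all

lemma srefI2 {n : ℕ} (i j : Fin n) (hij : i ≠ j) :
    sref (eps i) = sref (eps i - eps j) * sref (eps j) * sref (eps i - eps j) := by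
  refine lie_ext fun x k => ?_
  simp only [LinearIsometryEquiv.coe_mul, Function.comp_apply]
  simp only [sref_eps_apply, sref_sub_apply i j hij]
  split_ifs <;> subst_vars <;> simp_all

lemma srefI3 {n : ℕ} (i j : Fin n) (hij : i ≠ j) :
    sref (eps i + eps j) = sref (eps i) * sref (eps i - eps j) * sref (eps i) := by
  refine lie_ext fun x k => ?_
  simp only [LinearIsometryEquiv.coe_mul, Function.comp_apply]
  simp only [sref_add_apply i j hij, sref_eps_apply, sref_sub_apply i j hij]
  split_ifs <;> subst_vars <;> simp_all

lemma inner_en (n a b : ℕ) :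
    ⟪en n a, en n b⟫ = if a = b ∧ a < n then (1:ℝ) else 0 := by
  by_cases hb : b < n
  · rw [en_eq hb, inner_eps_right, en_apply]
    simp only [Fin.val_mk]
    split_ifs with h1 h2 h2 <;> first | rfl | omega
  · have : en n b = 0 := dif_neg hb
    rw [this, inner_zero_right]
    split_ifs with h1 <;> first | rfl | omega

section grp
variable {n : ℕ} {G : Subgroup (EuclideanSpace ℝ (Fin n) ≃ₗᵢ[ℝ] EuclideanSpace ℝ (Fin n))}

lemma s_comm {a b : ℕ} (ha : a < n) (hb : b < n) (hab : a ≠ b) :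
    sref (en n a - en n b) = sref (en n b - en n a) := by
  rw [en_eq ha, en_eq hb]
  exact sref_sub_comm ⟨a, ha⟩ ⟨b, hb⟩ (Fin.ne_of_val_ne hab)

lemma swap_mem {a b c : ℕ} (ha : a < n) (hb : b < n) (hc : c < n)
    (hab : a ≠ b) (hac : a ≠ c) (hbc : b ≠ c)
    (h1 : sref (en n a - en n b) ∈ G) (h2 : sref (en n b - en n c) ∈ G) :
    sref (en n a - en n c) ∈ G := by
  rw [en_eq ha, en_eq hb] at h1
  rw [en_eq hb, en_eq hc] at h2
  rw [en_eq ha, en_eq hc,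
    srefI1 ⟨a, ha⟩ ⟨b, hb⟩ ⟨c, hc⟩ (Fin.ne_of_val_ne hab)
      (Fin.ne_of_val_ne hac) (Fin.ne_of_val_ne hbc)]
  exact mul_mem (mul_mem h2 h1) h2

lemma flip_step {a b : ℕ} (ha : a < n) (hb : b < n) (hab : a ≠ b)
    (h1 : sref (en n a - en n b) ∈ G) (h2 : sref (en n b) ∈ G) :
    sref (en n a) ∈ G := by
  rw [en_eq ha, en_eq hb] at h1
  rw [en_eq hb] at h2
  rw [en_eq ha, srefI2 ⟨a, ha⟩ ⟨b, hb⟩ (Fin.ne_of_val_ne hab)]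
  exact mul_mem (mul_mem h1 h2) h1

lemma plus_mem {a b : ℕ} (ha : a < n) (hb : b < n) (hab : a ≠ b)
    (h1 : sref (en n a - en n b) ∈ G) (h2 : sref (en n a) ∈ G) :
    sref (en n a + en n b) ∈ G := by
  rw [en_eq ha, en_eq hb] at h1 ⊢
  rw [en_eq ha] at h2
  rw [srefI3 ⟨a, ha⟩ ⟨b, hb⟩ (Fin.ne_of_val_ne hab)]
  exact mul_mem (mul_mem h2 h1) h2

end grp

section chainB
variable {n w : ℕ} {G : Subgroup (EuclideanSpace ℝ (Fin n) ≃ₗᵢ[ℝ] EuclideanSpace ℝ (Fin n))}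
variable (hn : 3 ≤ n) (hw : w ≤ n - 2)
variable (hgA : ∀ i < w, sref (en n i - en n (i+1)) ∈ G)
variable (hgC : ∀ i, w ≤ i → i + 2 < n → sref (en n i - en n (i+2)) ∈ G)

include hn hw hgA in
lemma L_down : ∀ a < w, sref (en n a - en n w) ∈ G := by
  have key : ∀ d a, a + d + 1 = w → sref (en n a - en n w) ∈ G := by
    intro d
    induction d with
    | zero =>
      intro a ha
      have := hgA a (by omega)
      rwa [show a + 1 = w by omega] at this
    | succ d ih =>
      intro a ha
      exact swap_mem (by omega) (by omega) (by omega) (by omega) (by omega) (by omega)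
        (hgA a (by omega)) (ih (a+1) (by omega))
  intro a ha
  exact key (w - a - 1) a (by omega)

include hn hw hgC in
lemma L_up : ∀ r, w ≤ r → ∀ d, r + 2*(d+1) < n →
    sref (en n r - en n (r + 2*(d+1))) ∈ G := by
  intro r hr d
  induction d with
  | zero =>
    intro h
    have := hgC r hr (by omega)
    rwa [show r + 2 = r + 2*(0+1) by ring] at this
  | succ d ih =>
    intro h
    have h1 := ih (by omega)
    have h2 := hgC (r + 2*(d+1)) (by omega) (by omega)
    have := swap_mem (n := n) (a := r) (b := r + 2*(d+1)) (c := r + 2*(d+1) + 2)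
      (by omega) (by omega) (by omega) (by omega) (by omega) (by omega) h1 h2
    rwa [show r + 2*(d+1) + 2 = r + 2*(d+1+1) by ring] at this
  
include hn hw hgA hgC in
lemma hubIc : ∀ a < n, a ≠ w → (a - w) % 2 = 0 → sref (en n w - en n a) ∈ G := by
  intro a ha haw hpar
  rcases lt_or_gt_of_ne haw with h | h
  · rw [s_comm (by omega) (by omega) (by omega)]
    exact L_down hn hw hgA a h
  · have := L_up hn hw hgC w le_rfl ((a - w)/2 - 1) (by omega)
    rwa [show w + 2*((a-w)/2 - 1 + 1) = a by omega] at this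

include hn hw hgA hgC in
lemma connIc : ∀ a < n, ∀ b < n, a ≠ b → (a - w) % 2 = 0 → (b - w) % 2 = 0 →
    sref (en n a - en n b) ∈ G := by
  intro a ha b hb hab hpa hpb
  rcases eq_or_ne a w with rfl | haw
  · exact hubIc hn hw hgA hgC b hb (Ne.symm hab) hpb
  rcases eq_or_ne b w with rfl | hbw
  · rw [s_comm ha hb hab]
    exact hubIc hn hw hgA hgC a ha haw hpa
  · refine swap_mem ha (by omega) hb haw hab hbw.symm ?_ (hubIc hn hw hgA hgC b hb hbw hpb)
    rw [s_comm ha (by omega) haw]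
    exact hubIc hn hw hgA hgC a ha haw hpa

include hn hw hgC in
lemma hubI : ∀ a < n, a ≠ w + 1 → (a - w) % 2 = 1 → sref (en n (w+1) - en n a) ∈ G := by
  intro a ha haw hpar
  have := L_up hn hw hgC (w+1) (by omega) ((a - w - 1)/2 - 1) (by omega)
  rwa [show w + 1 + 2*((a-w-1)/2 - 1 + 1) = a by omega] at this

include hn hw hgC in
lemma connI : ∀ a < n, ∀ b < n, a ≠ b → (a - w) % 2 = 1 → (b - w) % 2 = 1 →
    sref (en n a - en n b) ∈ G := by
  intro a ha b hb hab hpa hpb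
  rcases eq_or_ne a (w+1) with rfl | haw
  · exact hubI hn hw hgC b hb (Ne.symm hab) hpb
  rcases eq_or_ne b (w+1) with rfl | hbw
  · rw [s_comm ha hb hab]
    exact hubI hn hw hgC a ha haw hpa
  · refine swap_mem ha (by omega) hb haw hab hbw.symm ?_ (hubI hn hw hgC b hb hbw hpb)
    rw [s_comm ha (by omega) haw]
    exact hubI hn hw hgC a ha haw hpa

include hn hw hgA hgC in
lemma conn_all : ∀ a < n, ∀ b < n, a ≠ b → (a - w) % 2 = (b - w) % 2 →
    sref (en n a - en n b) ∈ G := by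
  intro a ha b hb hab hp
  rcases Nat.mod_two_eq_zero_or_one (a - w) with h | h
  · exact connIc hn hw hgA hgC a ha b hb hab h (by omega)
  · exact connI hn hw hgC a ha b hb hab h (by omega)

variable (hgP : sref (en n (n-2)) ∈ G) (hgQ : sref (en n (n-1)) ∈ G)

include hn hw hgA hgC hgP hgQ in
lemma allFlips : ∀ a < n, sref (en n a) ∈ G := by
  intro a ha
  by_cases hm : (a - w) % 2 = ((n-2) - w) % 2
  · rcases eq_or_ne a (n-2) with rfl | hne
    · exact hgP
    · exact flip_step ha (by omega) hne
        (conn_all hn hw hgA hgC a ha (n-2) (by omega) hne hm) hgP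
  · have hm' : (a - w) % 2 = ((n-1) - w) % 2 := by omega
    rcases eq_or_ne a (n-1) with rfl | hne
    · exact hgQ
    · exact flip_step ha (by omega) hne
        (conn_all hn hw hgA hgC a ha (n-1) (by omega) hne hm') hgQ

end chainB

section chainA
variable {n : ℕ} {G : Subgroup (EuclideanSpace ℝ (Fin n) ≃ₗᵢ[ℝ] EuclideanSpace ℝ (Fin n))}
variable (hn : 3 ≤ n)
variable (hgA : ∀ i, i + 1 < n → sref (en n i - en n (i+1)) ∈ G)

include hn hgA in
lemma connA : ∀ a < n, ∀ b < n, a ≠ b → sref (en n a - en n b) ∈ G := by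
  have key : ∀ d a, a + d + 1 < n → sref (en n a - en n (a + d + 1)) ∈ G := by
    intro d
    induction d with
    | zero => intro a ha; exact hgA a ha
    | succ d ih =>
      intro a ha
      have := swap_mem (n := n) (a := a) (b := a + d + 1) (c := a + d + 2)
        (by omega) (by omega) (by omega) (by omega) (by omega) (by omega)
        (ih a (by omega)) (hgA (a + d + 1) (by omega))
      rwa [show a + d + 2 = a + (d+1) + 1 by ring] at this
  intro a ha b hb hab
  rcases lt_or_gt_of_ne hab with h | h
  · have := key (b - a - 1) a (by omega)
    rwa [show a + (b - a - 1) + 1 = b by omega] at this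
  · rw [s_comm ha hb hab]
    have := key (a - b - 1) b (by omega)
    rwa [show b + (a - b - 1) + 1 = a by omega] at this

variable (hgQ : sref (en n (n-1)) ∈ G)

include hn hgA hgQ in
lemma flipsA : ∀ a < n, sref (en n a) ∈ G := by
  intro a ha
  rcases eq_or_ne a (n-1) with rfl | hne
  · exact hgQ
  · exact flip_step ha (by omega) hne (connA hn hgA a ha (n-1) (by omega) hne) hgQ

end chainA

def HeadForm (n : ℕ) (β : EuclideanSpace ℝ (Fin n)) (h : ℕ) : Prop :=
  (h + 1 < n ∧ β = en n h - en n (h+1)) ∨ (h + 2 < n ∧ β = en n h - en n (h+2)) ∨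
  (h = n - 2 ∧ β = en n h) ∨ (h = n - 1 ∧ β = en n h)

lemma bs_lt {n : ℕ} (i : Fin n) (h : (i : ℕ) + 1 < n) :
    BnSimple n i = en n (i : ℕ) - en n ((i : ℕ) + 1) := by
  rw [BnSimple, dif_pos h, en_eq i.2, en_eq h]

lemma bs_last {n : ℕ} (i : Fin n) (h : ¬ ((i : ℕ) + 1 < n)) :
    BnSimple n i = en n (i : ℕ) := by
  rw [BnSimple, dif_neg h, en_eq i.2]

lemma adj_of_inner_ne {n : ℕ} (i j : Fin n) (hij : i ≠ j)
    (h : ⟪BnSimple n i, BnSimple n j⟫ ≠ 0) :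
    (i : ℕ) = (j : ℕ) + 1 ∨ (j : ℕ) = (i : ℕ) + 1 := by
  have hvij : (i : ℕ) ≠ (j : ℕ) := fun hc => hij (Fin.ext hc)
  have hi2 := i.2
  have hj2 := j.2
  by_cases hi : (i : ℕ) + 1 < n <;> by_cases hj : (j : ℕ) + 1 < n
  · rw [bs_lt i hi, bs_lt j hj] at h
    simp only [inner_sub_left, inner_sub_right, inner_en] at h
    split_ifs at h <;> first | omega | norm_num at h <;> omega
  · rw [bs_lt i hi, bs_last j hj] at h
    simp only [inner_sub_left, inner_en] at h
    split_ifs at h <;> first | omega | norm_num at h <;> omega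
  · rw [bs_last i hi, bs_lt j hj] at h
    simp only [inner_sub_right, inner_en] at h
    split_ifs at h <;> first | omega | norm_num at h <;> omega
  · omega

lemma formAll {n : ℕ} (hn : 3 ≤ n) (β : EuclideanSpace ℝ (Fin n))
    (hf : (∃ i, β = BnSimple n i) ∨
      ∃ i j : Fin n, i ≠ j ∧ ⟪BnSimple n i, BnSimple n j⟫ ≠ 0 ∧
        β = BnSimple n i + BnSimple n j) :
    ∃ h, HeadForm n β h := by
  rcases hf with ⟨i, rfl⟩ | ⟨i, j, hij, hinner, rfl⟩
  · by_cases hi : (i : ℕ) + 1 < n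
    · exact ⟨i, Or.inl ⟨hi, bs_lt i hi⟩⟩
    · refine ⟨(i : ℕ), Or.inr (Or.inr (Or.inr ⟨by have := i.2; omega, bs_last i hi⟩))⟩
  · -- sum of two adjacent simples
    have hadj := adj_of_inner_ne i j hij hinner
    -- reduce to the case j = i + 1
    rcases hadj with hlt | hlt
    · -- i = j + 1 : swap roles
      have hj2 := i.2
      by_cases hi : (i : ℕ) + 1 < n
      · refine ⟨(j : ℕ), Or.inr (Or.inl ⟨by omega, ?_⟩)⟩
        rw [bs_lt i hi, bs_lt j (by omega), hlt]
        rw [show (j:ℕ) + 1 + 1 = (j:ℕ) + 2 by ring]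
        abel
      · refine ⟨(j : ℕ), Or.inr (Or.inr (Or.inl ⟨by omega, ?_⟩))⟩
        rw [bs_last i hi, bs_lt j (by omega), hlt]
        have : (j : ℕ) = n - 2 := by omega
        rw [this, show n - 2 + 1 = n - 1 by omega]
        abel
    · have hj2 := j.2
      by_cases hj : (j : ℕ) + 1 < n
      · refine ⟨(i : ℕ), Or.inr (Or.inl ⟨by omega, ?_⟩)⟩
        rw [bs_lt i (by omega), bs_lt j hj, hlt]
        rw [show (i:ℕ) + 1 + 1 = (i:ℕ) + 2 by ring]
        abel
      · refine ⟨(i : ℕ), Or.inr (Or.inr (Or.inl ⟨by omega, ?_⟩))⟩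
        rw [bs_lt i (by omega), bs_last j hj, hlt]
        have : (i : ℕ) = n - 2 := by omega
        rw [this, show n - 2 + 1 = n - 1 by omega]
        abel

lemma en_coord_ne {n : ℕ} {v v' : EuclideanSpace ℝ (Fin n)} (k : Fin n)
    (h : v k ≠ v' k) : v ≠ v' := fun he => h (by rw [he])

section structure_
variable {n : ℕ} (hn : 3 ≤ n) {Pi' : Set (EuclideanSpace ℝ (Fin n))}
variable (hnonpos : ∀ β ∈ Pi', ∀ γ ∈ Pi', β ≠ γ → ⟪β, γ⟫ ≤ 0)

include hn hnonpos in
lemma head_unique {β γ : EuclideanSpace ℝ (Fin n)} {h : ℕ}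
    (hβ : β ∈ Pi') (hγ : γ ∈ Pi') (h1 : HeadForm n β h) (h2 : HeadForm n γ h) :
    β = γ := by
  by_contra hne
  have hip := hnonpos β hβ γ hγ hne
  rcases h1 with ⟨hb, rfl⟩ | ⟨hb, rfl⟩ | ⟨hb, rfl⟩ | ⟨hb, rfl⟩ <;>
    rcases h2 with ⟨hc, rfl⟩ | ⟨hc, rfl⟩ | ⟨hc, rfl⟩ | ⟨hc, rfl⟩ <;>
      [skip; skip; skip; omega; skip; skip; skip; omega; skip; omega; skip; omega;
       omega; omega; omega; skip] <;>
    simp only [inner_sub_left, inner_sub_right, inner_en, eq_self_iff_true, true_and] at hip <;>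
    · split_ifs at hip <;> first | omega | (exact hne rfl) | norm_num at hip
end structure_

lemma tclash1 {n : ℕ} {Pi' : Set (EuclideanSpace ℝ (Fin n))}
    (hnonpos : ∀ β ∈ Pi', ∀ γ ∈ Pi', β ≠ γ → ⟪β, γ⟫ ≤ 0) {i : ℕ} (hi : i + 2 < n)
    (h1 : en n (i+1) - en n (i+2) ∈ Pi') (h2 : en n i - en n (i+2) ∈ Pi') : False := by
  have hne : en n (i+1) - en n (i+2) ≠ en n i - en n (i+2) := by
    refine en_coord_ne ⟨i, by omega⟩ ?_
    simp [PiLp.sub_apply, en_apply]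
  have := hnonpos _ h1 _ h2 hne
  simp only [inner_sub_left, inner_sub_right, inner_en, eq_self_iff_true, true_and] at this
  split_ifs at this <;> first | omega | norm_num at this

lemma tclash2 {n : ℕ} (hn : 3 ≤ n) {Pi' : Set (EuclideanSpace ℝ (Fin n))}
    (hnonpos : ∀ β ∈ Pi', ∀ γ ∈ Pi', β ≠ γ → ⟪β, γ⟫ ≤ 0)
    (h1 : en n (n-2) ∈ Pi') (h2 : en n (n-2) - en n (n-1) ∈ Pi') : False := by
  have hne : en n (n-2) ≠ en n (n-2) - en n (n-1) := by
    refine en_coord_ne ⟨n-1, by omega⟩ ?_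
    simp [PiLp.sub_apply, en_apply, show ¬(n-1 = n-2) by omega]
  have := hnonpos _ h1 _ h2 hne
  simp only [inner_sub_right, inner_en, eq_self_iff_true, true_and] at this
  split_ifs at this <;> first | omega | norm_num at this

lemma headform_lt {n : ℕ} (hn : 3 ≤ n) {β : EuclideanSpace ℝ (Fin n)} {h : ℕ}
    (hf : HeadForm n β h) : h < n := by
  rcases hf with ⟨hb, _⟩ | ⟨hb, _⟩ | ⟨hb, _⟩ | ⟨hb, _⟩ <;> omega

lemma head_surj {n : ℕ} (hn : 3 ≤ n) {Pi' : Set (EuclideanSpace ℝ (Fin n))}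
    (hbasis₁ : Submodule.span ℝ Pi' = ⊤)
    (hbasis₂ : LinearIndependent ℝ (fun x : Pi' => (x : EuclideanSpace ℝ (Fin n))))
    (hnonpos : ∀ β ∈ Pi', ∀ γ ∈ Pi', β ≠ γ → ⟪β, γ⟫ ≤ 0)
    (hHF : ∀ β ∈ Pi', ∃ h, HeadForm n β h) :
    ∀ h < n, ∃ β ∈ Pi', HeadForm n β h := by
  classical
  have hfin : Pi'.Finite := hbasis₂.setFinite
  haveI := hfin.fintype
  have hcard : Pi'.toFinset.card = n := by
    have h1 := finrank_span_set_eq_card (s := Pi') hbasis₂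
    rw [hbasis₁] at h1
    rw [← h1, finrank_top, finrank_euclideanSpace_fin]
  set F : ∀ β ∈ Pi'.toFinset, ℕ := fun β hβ =>
    (hHF β (by simpa using hβ)).choose with hF
  have hFspec : ∀ β hβ, HeadForm n β (F β hβ) := fun β hβ =>
    (hHF β (by simpa using hβ)).choose_spec
  have hsurj := Finset.surj_on_of_inj_on_of_card_le F
    (fun β hβ => Finset.mem_range.2 (headform_lt hn (hFspec β hβ)))
    (fun β γ hβ hγ heq => head_unique hn hnonpos (by simpa using hβ) (by simpa using hγ)
      (hFspec β hβ) (heq ▸ hFspec γ hγ))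
    (by rw [hcard, Finset.card_range])
  intro h hh
  obtain ⟨β, hβ, hbh⟩ := hsurj h (Finset.mem_range.2 hh)
  exact ⟨β, by simpa using hβ, hbh ▸ hFspec β hβ⟩

section classify
variable {n : ℕ} (hn : 3 ≤ n) {Pi' : Set (EuclideanSpace ℝ (Fin n))}
variable (hnonpos : ∀ β ∈ Pi', ∀ γ ∈ Pi', β ≠ γ → ⟪β, γ⟫ ≤ 0)
variable (hsurj : ∀ h < n, ∃ β ∈ Pi', HeadForm n β h)

include hn hsurj in
lemma atQ : en n (n-1) ∈ Pi' := by
  obtain ⟨β, hβ, hf⟩ := hsurj (n-1) (by omega)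
  rcases hf with ⟨hb, rfl⟩ | ⟨hb, rfl⟩ | ⟨hb, rfl⟩ | ⟨hb, rfl⟩ <;> first | omega | exact hβ

include hn hsurj in
lemma atP : (en n (n-2) - en n (n-1) ∈ Pi') ∨ (en n (n-2) ∈ Pi') := by
  obtain ⟨β, hβ, hf⟩ := hsurj (n-2) (by omega)
  rcases hf with ⟨hb, rfl⟩ | ⟨hb, rfl⟩ | ⟨hb, rfl⟩ | ⟨hb, rfl⟩
  · left; rwa [show n-2+1 = n-1 by omega] at hβ
  · omega
  · right; exact hβ
  · omega

include hn hsurj in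
lemma atMid {h : ℕ} (hh : h + 2 < n) :
    (en n h - en n (h+1) ∈ Pi') ∨ (en n h - en n (h+2) ∈ Pi') := by
  obtain ⟨β, hβ, hf⟩ := hsurj h (by omega)
  rcases hf with ⟨hb, rfl⟩ | ⟨hb, rfl⟩ | ⟨hb, rfl⟩ | ⟨hb, rfl⟩ <;>
    first | omega | exact Or.inl hβ | exact Or.inr hβ

include hn hsurj hnonpos in
lemma caseA_all (hA : en n (n-2) - en n (n-1) ∈ Pi') :
    ∀ i, i + 1 < n → en n i - en n (i+1) ∈ Pi' := by
  have key : ∀ d, ∀ i, i + 1 + d = n - 1 → en n i - en n (i+1) ∈ Pi' := by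
    intro d
    induction d with
    | zero =>
      intro i hi
      have : i = n - 2 := by omega
      subst this
      rwa [show n-2+1 = n-1 by omega]
    | succ d ih =>
      intro i hi
      have hnext := ih (i+1) (by omega)
      rcases atMid hn hsurj (h := i) (by omega) with h | h
      · exact h
      · exact absurd h (fun hc => tclash1 hnonpos (by omega) hnext hc)
  intro i hi
  exact key (n - 1 - (i+1)) i (by omega)

end classify

section classifyB
variable {n : ℕ} (hn : 3 ≤ n) {Pi' : Set (EuclideanSpace ℝ (Fin n))}
variable (hnonpos : ∀ β ∈ Pi', ∀ γ ∈ Pi', β ≠ γ → ⟪β, γ⟫ ≤ 0)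
variable (hsurj : ∀ h < n, ∃ β ∈ Pi', HeadForm n β h)
variable (hHF : ∀ β ∈ Pi', ∃ h, HeadForm n β h)

include hn hnonpos hsurj hHF in
lemma caseB_struct (hP : en n (n-2) ∈ Pi') :
    ∃ w ≤ n - 2,
      (∀ i < w, en n i - en n (i+1) ∈ Pi') ∧
      (∀ i, w ≤ i → i + 2 < n → en n i - en n (i+2) ∈ Pi') ∧
      (∀ β ∈ Pi', (∃ i < w, β = en n i - en n (i+1)) ∨
        (∃ i, w ≤ i ∧ i + 2 < n ∧ β = en n i - en n (i+2)) ∨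
        β = en n (n-2) ∨ β = en n (n-1)) := by
  classical
  have hAn2 : en n (n-2) - en n (n-1) ∉ Pi' := fun hc => tclash2 hn hnonpos hP hc
  obtain ⟨w, hw, hAs, hCs⟩ :
      ∃ w ≤ n - 2,
        (∀ i < w, en n i - en n (i+1) ∈ Pi') ∧
        (∀ i, w ≤ i → i + 2 < n → en n i - en n (i+2) ∈ Pi') := by
    by_cases hW : ∃ i, i + 2 < n ∧ en n i - en n (i+2) ∈ Pi'
    · set w := Nat.find hW with hwdef
      obtain ⟨hw2, hwC⟩ := Nat.find_spec hW
      have hmin : ∀ i < w, ¬(i + 2 < n ∧ en n i - en n (i+2) ∈ Pi') :=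
        fun i hi => Nat.find_min hW hi
      refine ⟨w, by omega, fun i hi => ?_, ?_⟩
      · rcases atMid hn hsurj (h := i) (by omega) with h | h
        · exact h
        · exact absurd ⟨by omega, h⟩ (hmin i hi)
      · have key : ∀ d, w + d + 2 < n → en n (w+d) - en n (w+d+2) ∈ Pi' := by
          intro d
          induction d with
          | zero => intro h; simpa using hwC
          | succ d ih =>
            intro h
            have hprev := ih (by omega)
            rcases atMid hn hsurj (h := w+d+1) (by omega) with h' | h'
            · exfalso
              rw [show w+d+1+1 = w+d+2 by ring] at h'
              exact tclash1 hnonpos (i := w + d) (by omega) h' hprev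
            · rwa [show w+d+1+2 = w+(d+1)+2 by ring] at h'
        intro i hi hin
        have := key (i - w) (by omega)
        rwa [show w + (i-w) = i by omega] at this
    · push_neg at hW
      refine ⟨n-2, le_rfl, fun i hi => ?_, fun i hi hin => ?_⟩
      · rcases atMid hn hsurj (h := i) (by omega) with h | h
        · exact h
        · exact absurd h (hW i (by omega))
      · omega
  refine ⟨w, hw, hAs, hCs, fun β hβ => ?_⟩
  obtain ⟨h, hf⟩ := hHF β hβ
  rcases hf with ⟨hb, rfl⟩ | ⟨hb, rfl⟩ | ⟨hb, rfl⟩ | ⟨hb, rfl⟩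
  · by_cases hhw : h < w
    · exact Or.inl ⟨h, hhw, rfl⟩
    · by_cases hh2 : h + 2 < n
      · exfalso
        have hC := hCs h (by omega) hh2
        have := head_unique hn hnonpos hβ hC (Or.inl ⟨hb, rfl⟩) (Or.inr (Or.inl ⟨hh2, rfl⟩))
        exact en_coord_ne (v := en n h - en n (h+1)) (v' := en n h - en n (h+2))
          ⟨h+1, by omega⟩ (by simp [PiLp.sub_apply, en_apply]) this
      · exfalso
        have : h = n - 2 := by omega
        subst this
        rw [show n-2+1 = n-1 by omega] at hβ
        exact hAn2 hβ
  · by_cases hhw : w ≤ h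
    · exact Or.inr (Or.inl ⟨h, hhw, hb, rfl⟩)
    · exfalso
      have hA := hAs h (by omega)
      have := head_unique hn hnonpos hβ hA (Or.inr (Or.inl ⟨hb, rfl⟩)) (Or.inl ⟨by omega, rfl⟩)
      exact en_coord_ne (v := en n h - en n (h+2)) (v' := en n h - en n (h+1))
        ⟨h+1, by omega⟩ (by simp [PiLp.sub_apply, en_apply]) this
  · exact Or.inr (Or.inr (Or.inl (by rw [hb])))
  · exact Or.inr (Or.inr (Or.inr (by rw [hb])))

end classifyB


/-- Let `Π′` be a basis of `ℝ^n` (`n ≥ 3`) consisting of positive roots of `B_n` with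
pairwise nonpositive inner products, each being a simple root or a sum of two adjacent
simple roots, and suppose the reflection group `Γ` generated by `Π′` is a proper subgroup
of `W(B_n)`. Then `Γ = B_I × B_J` with `J = I^c` and `I = {n, n-2, …, n-2k}`
(`0 ≤ k < (n-1)/2`) or `I = {n-1, n-3, …, n-2k+1}` (`0 < k < n/2`) (1-based indexing;
the formulas below are the 0-based translations). -/
theorem proper_reflection_subgroup_Bn (n : ℕ) (hn : 3 ≤ n)
    (Pi' : Set (EuclideanSpace ℝ (Fin n)))
    (hbasis₁ : Submodule.span ℝ Pi' = ⊤)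
    (hbasis₂ : LinearIndependent ℝ (fun x : Pi' => (x : EuclideanSpace ℝ (Fin n))))
    (hpos : Pi' ⊆ BnPositiveRoots n)
    (hnonpos : ∀ β ∈ Pi', ∀ γ ∈ Pi', β ≠ γ → ⟪β, γ⟫ ≤ 0)
    (hform : ∀ β ∈ Pi', (∃ i, β = BnSimple n i) ∨
      ∃ i j : Fin n, i ≠ j ∧ ⟪BnSimple n i, BnSimple n j⟫ ≠ 0 ∧
        β = BnSimple n i + BnSimple n j)
    (hproper : Subgroup.closure (sref '' Pi') < BGrp (Set.univ : Set (Fin n))) :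
    ∃ I : Set (Fin n),
      ((∃ k : ℕ, 2 * k + 1 < n ∧
          I = {i : Fin n | ∃ m : ℕ, m ≤ k ∧ (i : ℕ) = n - 1 - 2 * m}) ∨
       (∃ k : ℕ, 0 < k ∧ 2 * k < n ∧
          I = {i : Fin n | ∃ m : ℕ, 1 ≤ m ∧ m ≤ k ∧ (i : ℕ) = n - 2 * m})) ∧
      Subgroup.closure (sref '' Pi') = BGrp I ⊔ BGrp Iᶜ := by
  classical
  set Γ := Subgroup.closure (sref '' Pi') with hΓdef
  have hHF : ∀ β ∈ Pi', ∃ h, HeadForm n β h := fun β hβ => formAll hn β (hform β hβ)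
  have hsurj := head_surj hn hbasis₁ hbasis₂ hnonpos hHF
  have hQ : en n (n-1) ∈ Pi' := atQ hn hsurj
  have hgQ : sref (en n (n-1)) ∈ Γ := Subgroup.subset_closure ⟨_, hQ, rfl⟩
  rcases atP hn hsurj with hA | hP
  · exfalso
    have hAall := caseA_all hn hnonpos hsurj hA
    have hgA : ∀ i, i+1 < n → sref (en n i - en n (i+1)) ∈ Γ := fun i hi =>
      Subgroup.subset_closure ⟨_, hAall i hi, rfl⟩
    have hle : BGrp (Set.univ : Set (Fin n)) ≤ Γ := by
      rw [BGrp]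
      refine (Subgroup.closure_le _).2 ?_
      rintro g (⟨i, -, j, -, hij, (rfl | rfl)⟩ | ⟨i, -, rfl⟩)
      · have := connA hn hgA i.1 i.2 j.1 j.2 (fun h => hij (Fin.ext h))
        rwa [en_eq i.2, en_eq j.2, Fin.eta, Fin.eta] at this
      · have hs := connA hn hgA i.1 i.2 j.1 j.2 (fun h => hij (Fin.ext h))
        have hf := flipsA hn hgA hgQ i.1 i.2
        have := plus_mem i.2 j.2 (fun h => hij (Fin.ext h)) hs hf
        rwa [en_eq i.2, en_eq j.2, Fin.eta, Fin.eta] at this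
      · have := flipsA hn hgA hgQ i.1 i.2
        rwa [en_eq i.2, Fin.eta] at this
    exact absurd (le_antisymm hproper.le hle) hproper.ne
  · obtain ⟨w, hw, hAs, hCs, hsub⟩ := caseB_struct hn hnonpos hsurj hHF hP
    have hgP : sref (en n (n-2)) ∈ Γ := Subgroup.subset_closure ⟨_, hP, rfl⟩
    have hgA : ∀ i < w, sref (en n i - en n (i+1)) ∈ Γ := fun i hi =>
      Subgroup.subset_closure ⟨_, hAs i hi, rfl⟩
    have hgC : ∀ i, w ≤ i → i + 2 < n → sref (en n i - en n (i+2)) ∈ Γ := fun i hi hin =>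
      Subgroup.subset_closure ⟨_, hCs i hi hin, rfl⟩
    set I : Set (Fin n) := {i : Fin n | ((i : ℕ) - w) % 2 = 1} with hIdef
    have hmemI : ∀ i : Fin n, i ∈ I ↔ ((i : ℕ) - w) % 2 = 1 := fun i => Iff.rfl
    have hmemIc : ∀ i : Fin n, i ∈ Iᶜ ↔ ((i : ℕ) - w) % 2 = 0 := by
      intro i
      simp only [Set.mem_compl_iff, hmemI]
      omega
    refine ⟨I, ?_, ?_⟩
    · -- arithmetic form of I
      by_cases hpar : (n - w) % 2 = 0
      · refine Or.inl ⟨(n - 2 - w) / 2, by omega, ?_⟩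
        ext i
        have hi2 := i.2
        simp only [hmemI, Set.mem_setOf_eq]
        constructor
        · intro h
          exact ⟨(n - 1 - (i : ℕ)) / 2, by omega, by omega⟩
        · rintro ⟨m, hm, he⟩
          omega
      · refine Or.inr ⟨(n - 1 - w) / 2, by omega, by omega, ?_⟩
        ext i
        have hi2 := i.2
        simp only [hmemI, Set.mem_setOf_eq]
        constructor
        · intro h
          exact ⟨(n - (i : ℕ)) / 2, by omega, by omega, by omega⟩
        · rintro ⟨m, hm1, hm2, he⟩
          omega
    · -- group equality
      refine le_antisymm ?_ ?_
      · refine (Subgroup.closure_le _).2 ?_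
        rintro g ⟨β, hβ, rfl⟩
        rcases hsub β hβ with ⟨i, hi, rfl⟩ | ⟨i, hi1, hi2, rfl⟩ | rfl | rfl
        · -- A_i, i < w : both ends in Iᶜ
          refine Subgroup.mem_sup_right (Subgroup.subset_closure ?_)
          refine Or.inl ⟨⟨i, by omega⟩, ?_, ⟨i+1, by omega⟩, ?_, ?_, Or.inl ?_⟩
          · rw [hmemIc]; simp; omega
          · rw [hmemIc]; simp; omega
          · simp [Fin.ext_iff]
          · rw [en_eq (show i < n by omega), en_eq (show i + 1 < n by omega)]
        · -- C_i
          by_cases hp : (i - w) % 2 = 1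
          · refine Subgroup.mem_sup_left (Subgroup.subset_closure ?_)
            refine Or.inl ⟨⟨i, by omega⟩, ?_, ⟨i+2, by omega⟩, ?_, ?_, Or.inl ?_⟩
            · rw [hmemI]; simpa using hp
            · rw [hmemI]; simp; omega
            · simp [Fin.ext_iff]
            · rw [en_eq (show i < n by omega), en_eq hi2]
          · refine Subgroup.mem_sup_right (Subgroup.subset_closure ?_)
            refine Or.inl ⟨⟨i, by omega⟩, ?_, ⟨i+2, by omega⟩, ?_, ?_, Or.inl ?_⟩
            · rw [hmemIc]; simp; omega
            · rw [hmemIc]; simp; omega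
            · simp [Fin.ext_iff]
            · rw [en_eq (show i < n by omega), en_eq hi2]
        · -- P
          by_cases hp : (n - 2 - w) % 2 = 1
          · refine Subgroup.mem_sup_left (Subgroup.subset_closure ?_)
            refine Or.inr ⟨⟨n-2, by omega⟩, ?_, ?_⟩
            · rw [hmemI]; simpa using hp
            · rw [en_eq (show n - 2 < n by omega)]
          · refine Subgroup.mem_sup_right (Subgroup.subset_closure ?_)
            refine Or.inr ⟨⟨n-2, by omega⟩, ?_, ?_⟩
            · rw [hmemIc]; simp; omega
            · rw [en_eq (show n - 2 < n by omega)]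
        · -- Q
          by_cases hp : (n - 1 - w) % 2 = 1
          · refine Subgroup.mem_sup_left (Subgroup.subset_closure ?_)
            refine Or.inr ⟨⟨n-1, by omega⟩, ?_, ?_⟩
            · rw [hmemI]; simpa using hp
            · rw [en_eq (show n - 1 < n by omega)]
          · refine Subgroup.mem_sup_right (Subgroup.subset_closure ?_)
            refine Or.inr ⟨⟨n-1, by omega⟩, ?_, ?_⟩
            · rw [hmemIc]; simp; omega
            · rw [en_eq (show n - 1 < n by omega)]
      · refine sup_le ?_ ?_ <;> refine (Subgroup.closure_le _).2 ?_
        · rintro g (⟨i, hiI, j, hjI, hij, (rfl | rfl)⟩ | ⟨i, hiI, rfl⟩)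
          · have := conn_all hn hw hgA hgC i.1 i.2 j.1 j.2 (fun h => hij (Fin.ext h))
              (by rw [hmemI] at hiI hjI; omega)
            rwa [en_eq i.2, en_eq j.2, Fin.eta, Fin.eta] at this
          · have hs := conn_all hn hw hgA hgC i.1 i.2 j.1 j.2 (fun h => hij (Fin.ext h))
              (by rw [hmemI] at hiI hjI; omega)
            have hf := allFlips hn hw hgA hgC hgP hgQ i.1 i.2
            have := plus_mem i.2 j.2 (fun h => hij (Fin.ext h)) hs hf
            rwa [en_eq i.2, en_eq j.2, Fin.eta, Fin.eta] at this
          · have := allFlips hn hw hgA hgC hgP hgQ i.1 i.2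
            rwa [en_eq i.2, Fin.eta] at this
        · rintro g (⟨i, hiI, j, hjI, hij, (rfl | rfl)⟩ | ⟨i, hiI, rfl⟩)
          · have := conn_all hn hw hgA hgC i.1 i.2 j.1 j.2 (fun h => hij (Fin.ext h))
              (by rw [hmemIc] at hiI hjI; omega)
            rwa [en_eq i.2, en_eq j.2, Fin.eta, Fin.eta] at this
          · have hs := conn_all hn hw hgA hgC i.1 i.2 j.1 j.2 (fun h => hij (Fin.ext h))
              (by rw [hmemIc] at hiI hjI; omega)
            have hf := allFlips hn hw hgA hgC hgP hgQ i.1 i.2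
            have := plus_mem i.2 j.2 (fun h => hij (Fin.ext h)) hs hf
            rwa [en_eq i.2, en_eq j.2, Fin.eta, Fin.eta] at this
          · have := allFlips hn hw hgA hgC hgP hgQ i.1 i.2
            rwa [en_eq i.2, Fin.eta] at this
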